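/- For every nonempty finite trace π = π₀,…,π_n over 2^P and all propositional formulas C, G over P: π satisfies the LTLf formula C U (G ∧ last) under standard LTLf finite-trace semantics at position 0 (i.e., G holds at position n and C holds at every position k < n) if and only if π ⊨ ⟨C*;G⟩end under LDLf semantics. -/
import Mathlib


/-- Propositional formulas over atomic propositions `P`. -/
inductive PropForm (P : Type) : Type
  | tru : PropForm P
  | atom : P → PropForm P
  | not : PropForm P → PropForm P
  | and : PropForm P → PropForm P → PropForm P

/-- Satisfaction of a propositional formula by an interpretation (subset of `P`). -/
def PropForm.Sat {P : Type} (I : Set P) : PropForm P → Prop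
  | .tru => True
  | .atom p => p ∈ I
  | .not ϕ => ¬ PropForm.Sat I ϕ
  | .and ϕ ψ => PropForm.Sat I ϕ ∧ PropForm.Sat I ψ

mutual
/-- LDLf formulas over atomic propositions `P`. -/
inductive LDLf (P : Type) : Type
  | tt : LDLf P
  | neg : LDLf P → LDLf P
  | conj : LDLf P → LDLf P → LDLf P
  | dia : PathExp P → LDLf P → LDLf P

/-- Path expressions of LDLf. -/
inductive PathExp (P : Type) : Type
  | prop : PropForm P → PathExp P
  | test : LDLf P → PathExp P
  | plus : PathExp P → PathExp P → PathExp P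
  | comp : PathExp P → PathExp P → PathExp P
  | star : PathExp P → PathExp P
end

mutual
/-- `LDLf.SatAt π φ i` : the LDLf formula `φ` is true at position `i` of the finite trace `π`. -/
def LDLf.SatAt {P : Type} (π : List (Set P)) : LDLf P → ℕ → Prop
  | .tt => fun _ => True
  | .neg φ => fun i => ¬ LDLf.SatAt π φ i
  | .conj φ₁ φ₂ => fun i => LDLf.SatAt π φ₁ i ∧ LDLf.SatAt π φ₂ i
  | .dia ρ φ => fun i => ∃ j, i ≤ j ∧ j ≤ π.length ∧ PathExp.Sem π ρ i j ∧ LDLf.SatAt π φ j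

/-- `PathExp.Sem π ρ i j` : the relation `π(i,j) ∈ L(ρ)`. -/
def PathExp.Sem {P : Type} (π : List (Set P)) : PathExp P → ℕ → ℕ → Prop
  | .prop ϕ => fun i j => j = i + 1 ∧ j ≤ π.length ∧ PropForm.Sat (π.getD i ∅) ϕ
  | .test ψ => fun i j => j = i ∧ LDLf.SatAt π ψ i
  | .plus ρ₁ ρ₂ => fun i j => PathExp.Sem π ρ₁ i j ∨ PathExp.Sem π ρ₂ i j
  | .comp ρ₁ ρ₂ => fun i j => ∃ k, PathExp.Sem π ρ₁ i k ∧ PathExp.Sem π ρ₂ k j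
  | .star ρ => Relation.ReflTransGen (PathExp.Sem π ρ)
end

/-- `[ρ]φ ≐ ¬⟨ρ⟩¬φ`. -/
def LDLf.box {P : Type} (ρ : PathExp P) (φ : LDLf P) : LDLf P := .neg (.dia ρ (.neg φ))

/-- `ff ≐ ¬tt`. -/
def LDLf.ff {P : Type} : LDLf P := .neg .tt

/-- A propositional formula `ϕ` used as an LDLf formula stands for `⟨ϕ⟩tt`. -/
def LDLf.ofProp {P : Type} (ϕ : PropForm P) : LDLf P := .dia (.prop ϕ) .tt

/-- `end ≐ [true?]ff`. -/
def LDLf.endf {P : Type} : LDLf P := LDLf.box (.test (LDLf.ofProp .tru)) LDLf.ff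

/-- `last ≐ [true]end`. -/
def LDLf.lastf {P : Type} : LDLf P := LDLf.box (.prop .tru) LDLf.endf

/-- `π ⊨ φ` means `π,0 ⊨ φ`. -/
def LDLf.Sat {P : Type} (π : List (Set P)) (φ : LDLf P) : Prop := LDLf.SatAt π φ 0

/-- LTLf formulas over atomic propositions `P`. -/
inductive LTLf (P : Type) : Type
  | prop : PropForm P → LTLf P
  | neg : LTLf P → LTLf P
  | conj : LTLf P → LTLf P → LTLf P
  | next : LTLf P → LTLf P
  | untl : LTLf P → LTLf P → LTLf P

/-- Standard LTLf finite-trace semantics: `LTLf.SatAt π φ i` means `φ` holds at position `i`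
of the nonempty finite trace `π`. -/
def LTLf.SatAt {P : Type} (π : List (Set P)) : LTLf P → ℕ → Prop
  | .prop ϕ => fun i => PropForm.Sat (π.getD i ∅) ϕ
  | .neg φ => fun i => ¬ LTLf.SatAt π φ i
  | .conj φ₁ φ₂ => fun i => LTLf.SatAt π φ₁ i ∧ LTLf.SatAt π φ₂ i
  | .next φ => fun i => i + 1 < π.length ∧ LTLf.SatAt π φ (i + 1)
  | .untl φ₁ φ₂ => fun i => ∃ j, i ≤ j ∧ j < π.length ∧ LTLf.SatAt π φ₂ j ∧
      ∀ k, i ≤ k → k < j → LTLf.SatAt π φ₁ k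

/-- `◇φ ≐ true U φ`. -/
def LTLf.ev {P : Type} (φ : LTLf P) : LTLf P := .untl (.prop .tru) φ

/-- `□φ ≐ ¬◇¬φ`. -/
def LTLf.always {P : Type} (φ : LTLf P) : LTLf P := .neg (LTLf.ev (.neg φ))

/-- `last ≐ ¬○true`: holds at `i` iff `i` is the final position of the trace. -/
def LTLf.lastf {P : Type} : LTLf P := .neg (.next (.prop .tru))

/-- `π ⊨ φ` means `φ` holds at position `0` of `π`. -/
def LTLf.Sat {P : Type} (π : List (Set P)) (φ : LTLf P) : Prop := LTLf.SatAt π φ 0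



section Aux
variable {P : Type}

lemma endf_iff (π : List (Set P)) (j : ℕ) :
    LDLf.SatAt π LDLf.endf j ↔ π.length ≤ j := by
  simp only [LDLf.endf, LDLf.box, LDLf.ff, LDLf.ofProp, LDLf.SatAt, PathExp.Sem]
  constructor
  · intro h
    by_contra hlt
    push_neg at hlt
    exact h ⟨j, le_refl j, le_of_lt hlt, ⟨rfl, ⟨j+1, le_of_lt (Nat.lt_succ_self j),
      hlt, ⟨rfl, hlt, trivial⟩, trivial⟩⟩, fun hh => hh trivial⟩
  · rintro h ⟨j', hjj', hj'len, ⟨hj'eq, hsat⟩, -⟩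
    obtain ⟨j'', hj1, hj2, ⟨he, hk2, -⟩, -⟩ := hsat
    omega

lemma star_chain (π : List (Set P)) (C : PropForm P) {a b : ℕ}
    (h : Relation.ReflTransGen (PathExp.Sem π (.prop C)) a b) :
    a ≤ b ∧ ∀ m, a ≤ m → m < b → PropForm.Sat (π.getD m ∅) C := by
  induction h with
  | refl => exact ⟨le_refl a, fun m h1 h2 => absurd h2 (not_lt.mpr h1)⟩
  | @tail b c hs hstep ih =>
    obtain ⟨heq, hlen, hC⟩ := hstep
    subst heq
    refine ⟨by omega, fun m h1 h2 => ?_⟩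
    rcases Nat.lt_or_ge m b with h | h
    · exact ih.2 m h1 h
    · have : m = b := by omega
      subst this; exact hC

lemma star_build (π : List (Set P)) (C : PropForm P) :
    ∀ b, b ≤ π.length → (∀ m, m < b → PropForm.Sat (π.getD m ∅) C) →
      Relation.ReflTransGen (PathExp.Sem π (.prop C)) 0 b := by
  intro b
  induction b with
  | zero => intro _ _; exact Relation.ReflTransGen.refl
  | succ n ih =>
    intro hlen hC
    exact Relation.ReflTransGen.tail
      (ih (by omega) (fun m hm => hC m (by omega)))
      ⟨rfl, hlen, hC n (Nat.lt_succ_self n)⟩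

end Aux

/-- On nonempty finite traces, the LTLf formula `C U (G ∧ last)` is equivalent to the
LDLf formula `⟨C*;G⟩end`. -/
theorem ltlf_C_until_G_last_iff_ldlf {P : Type} (π : List (Set P)) (hπ : π ≠ [])
    (C G : PropForm P) :
    LTLf.Sat π (.untl (.prop C) (.conj (.prop G) LTLf.lastf)) ↔
      LDLf.Sat π (.dia (.comp (.star (.prop C)) (.prop G)) LDLf.endf) := by
  have hlen : 0 < π.length := List.length_pos_iff.mpr hπ
  simp only [LTLf.Sat, LDLf.Sat, LTLf.SatAt, LDLf.SatAt, PathExp.Sem, LTLf.lastf, PropForm.Sat]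
  constructor
  · rintro ⟨j, -, hj, ⟨hG, hlast⟩, hC⟩
    have hjlast : j + 1 = π.length := by
      by_contra h
      exact hlast ⟨by omega, trivial⟩
    refine ⟨j + 1, by omega, by omega, ⟨j, ?_, rfl, by omega, hG⟩, ?_⟩
    · exact star_build π C j (by omega) (fun m hm => hC m (by omega) hm)
    · rintro ⟨j', -, -, ⟨rfl, j'', h1, h2, ⟨he, -, -⟩, -⟩, -⟩
      omega
  · rintro ⟨j, -, hjlen, ⟨k, hstar, heq, -, hG⟩, hend⟩
    have hend' : π.length ≤ j := by
      by_contra hlt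
      push_neg at hlt
      exact hend ⟨j, le_refl j, by omega, ⟨rfl, j+1, by omega, by omega,
        ⟨rfl, by omega, trivial⟩, trivial⟩, not_not_intro trivial⟩
    have hj : j = π.length := le_antisymm hjlen hend' 
    obtain ⟨-, hchain⟩ := star_chain π C hstar
    refine ⟨k, by omega, by omega, ⟨hG, ?_⟩, fun m _ hm => hchain m (by omega) hm⟩
    rintro ⟨h1, -⟩
    omega
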